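/- arXiv:2512.17670 — 3 statements merged into one kernel-verified Lean document; each statement's English description precedes it below -/
import Mathlib

section
/- Let Ω ⊆ ℝ^m be open and let E ⊂ Ω be compact with 𝓗¹(E) = 0. Let (w_j)_{j∈ℕ} be nonnegative, locally Lebesgue-integrable functions on Ω. Assume: (i) there exist r₀ > 0 and C ≥ 0 such that the closed r₀-neighborhood of E is contained in Ω and ∫_{B_r(x)} w_j dx ≤ C r for every j, every x with dist(x, E) < r₀, and every r ∈ (0, r₀); (ii) the family (w_j) is locally uniformly integrable on Ω \ E. Then the family (w_j) is locally uniformly integrable on Ω. -/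
/-!
Cover `E` by countably many balls centred on `E` whose radii sum to less than `η`; this is possible
for every `η > 0` because `𝓗¹(E) = 0`. By the linear growth bound each `w j` has mass at most
`C η` on the union `U` of these balls, uniformly in `j`. The compact set `K \ U` avoids `E`, so the
family is uniformly integrable there, and splitting `A ⊆ K` into `A ∩ U` and `A \ U` gives uniform
integrability on `K`.
-/

open MeasureTheory Metric Set
open scoped ENNReal NNReal

noncomputable section

/-- The family `(w j)` is uniformly integrable on `K` (with respect to Lebesgue measure):
for every `ε > 0` there is `δ > 0` such that `∫_A w j ≤ ε` for every `j` and every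
measurable `A ⊆ K` with `|A| < δ`. -/
def UnifIntOn {m : ℕ} (w : ℕ → EuclideanSpace ℝ (Fin m) → ℝ)
    (K : Set (EuclideanSpace ℝ (Fin m))) : Prop :=
  ∀ ε : ℝ, 0 < ε → ∃ δ : ℝ, 0 < δ ∧
    ∀ A : Set (EuclideanSpace ℝ (Fin m)), MeasurableSet A → A ⊆ K →
      volume A < ENNReal.ofReal δ →
      ∀ j : ℕ, ∫⁻ x in A, ENNReal.ofReal (w j x) ≤ ENNReal.ofReal ε

theorem exists_cover_tsum_ediam_lt_of_hausdorffMeasure_one_eq_zero {X : Type*} [EMetricSpace X]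
    [MeasurableSpace X] [BorelSpace X] {E : Set X}
    (hE : μH[1] E = 0) {ε : ℝ≥0∞} (hε : ε ≠ 0) :
    ∃ t : ℕ → Set X, E ⊆ ⋃ n, t n ∧ ∑' n, ediam (t n) < ε := by
  have hlt : (⨅ (t : ℕ → Set X) (_ : E ⊆ ⋃ n, t n) (_ : ∀ n, ediam (t n) ≤ 1),
      ∑' n, ⨆ _ : (t n).Nonempty, ediam (t n) ^ (1 : ℝ)) < ε := by
    refine lt_of_le_of_lt ?_ (pos_iff_ne_zero.2 hε)
    rw [← hE, Measure.hausdorffMeasure_apply]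
    exact le_iSup₂ (f := fun r (_ : 0 < r) => ⨅ (t : ℕ → Set X) (_ : E ⊆ ⋃ n, t n)
      (_ : ∀ n, ediam (t n) ≤ r), ∑' n, ⨆ _ : (t n).Nonempty, ediam (t n) ^ (1 : ℝ)) 1 one_pos
  simp only [iInf_lt_iff] at hlt
  obtain ⟨t, hcov, -, hsum⟩ := hlt
  refine ⟨t, hcov, lt_of_le_of_lt (ENNReal.tsum_le_tsum fun n => ?_) hsum⟩
  rcases (t n).eq_empty_or_nonempty with h | h <;> simp [h]

section HausdorffCover

variable {X : Type*} [MetricSpace X] [MeasurableSpace X] [BorelSpace X]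

theorem exists_ball_cover_tsum_lt_of_hausdorffMeasure_one_eq_zero {E : Set X}
    (hne : E.Nonempty) (hE : μH[1] E = 0) {ε : ℝ≥0∞} (hε : ε ≠ 0) :
    ∃ (x : ℕ → X) (ρ : ℕ → ℝ), (∀ n, x n ∈ E ∧ 0 < ρ n) ∧ E ⊆ ⋃ n, ball (x n) (ρ n) ∧
      ∑' n, ENNReal.ofReal (ρ n) < ε := by
  classical
  have hε2 : ε / 2 ≠ 0 := (ENNReal.half_pos hε).ne'
  obtain ⟨t, hcov, hdiam⟩ := exists_cover_tsum_ediam_lt_of_hausdorffMeasure_one_eq_zero hE hε2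
  obtain ⟨s, hspos, hs⟩ := ENNReal.exists_pos_sum_of_countable hε2 ℕ
  have hfin : ∀ n, ediam (t n) ≠ ⊤ := fun n => ne_top_of_lt ((ENNReal.le_tsum n).trans_lt hdiam)
  -- The ball around a point of `t n ∩ E` of radius `diam (t n) + s n` contains `t n`.
  let x n : X := if h : (t n ∩ E).Nonempty then h.choose else hne.some
  refine ⟨x, fun n => diam (t n) + s n,
    fun n => ⟨?_, add_pos_of_nonneg_of_pos diam_nonneg (hspos n)⟩, fun y hy => ?_, ?_⟩
  · by_cases h : (t n ∩ E).Nonempty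
    · simpa [x, h] using h.choose_spec.2
    · simpa [x, h] using hne.some_mem
  · obtain ⟨n, hn⟩ := mem_iUnion.1 (hcov hy)
    have h : (t n ∩ E).Nonempty := ⟨y, hn, hy⟩
    have hxn : x n ∈ t n := by simpa [x, h] using h.choose_spec.1
    refine mem_iUnion.2 ⟨n, mem_ball.2 ?_⟩
    exact (dist_le_diam_of_mem' (hfin n) hn hxn).trans_lt
      (lt_add_of_pos_right _ (NNReal.coe_pos.2 (hspos n)))
  · calc ∑' n, ENNReal.ofReal (diam (t n) + s n) = ∑' n, (ediam (t n) + s n) := by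
          congr 1 with n
          rw [ENNReal.ofReal_add diam_nonneg (s n).coe_nonneg, diam,
            ENNReal.ofReal_toReal (hfin n), ENNReal.ofReal_coe_nnreal]
      _ = ∑' n, ediam (t n) + ∑' n, (s n : ℝ≥0∞) := ENNReal.tsum_add
      _ < ε / 2 + ε / 2 := ENNReal.add_lt_add hdiam hs
      _ = ε := ENNReal.add_halves ε

theorem exists_isOpen_superset_lintegral_le_of_linear_growth (μ : Measure X) {E : Set X}
    (hE : μH[1] E = 0) {ι : Type*} {f : ι → X → ℝ≥0∞} {r₀ C : ℝ} (hr₀ : 0 < r₀) (hC : 0 ≤ C)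
    (hgrow : ∀ j, ∀ x ∈ E, ∀ r, 0 < r → r < r₀ →
      ∫⁻ y in ball x r, f j y ∂μ ≤ ENNReal.ofReal (C * r))
    {ε : ℝ} (hε : 0 < ε) :
    ∃ U, IsOpen U ∧ E ⊆ U ∧ ∀ j, ∫⁻ y in U, f j y ∂μ ≤ ENNReal.ofReal ε := by
  rcases E.eq_empty_or_nonempty with rfl | hne
  · exact ⟨∅, isOpen_empty, subset_rfl, fun j => by simp⟩
  set η := min r₀ (ε / (C + 1))
  have hη : 0 < η := lt_min hr₀ (by positivity)
  have hCη : C * η ≤ ε := calc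
    C * η ≤ C * (ε / (C + 1)) := mul_le_mul_of_nonneg_left (min_le_right _ _) hC
    _ ≤ ε := by rw [mul_div_assoc', div_le_iff₀ (by linarith)]; nlinarith
  obtain ⟨x, ρ, hxρ, hcov, hsum⟩ :=
    exists_ball_cover_tsum_lt_of_hausdorffMeasure_one_eq_zero hne hE (ENNReal.ofReal_pos.2 hη).ne'
  have hρ : ∀ n, ρ n < r₀ := fun n =>
    ((ENNReal.ofReal_lt_ofReal_iff hη).1 ((ENNReal.le_tsum n).trans_lt hsum)).trans_le
      (min_le_left _ _)
  refine ⟨⋃ n, ball (x n) (ρ n), isOpen_iUnion fun _ => isOpen_ball, hcov, fun j => ?_⟩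
  calc ∫⁻ y in ⋃ n, ball (x n) (ρ n), f j y ∂μ
      ≤ ∑' n, ∫⁻ y in ball (x n) (ρ n), f j y ∂μ := lintegral_iUnion_le _ _
    _ ≤ ∑' n, ENNReal.ofReal C * ENNReal.ofReal (ρ n) := ENNReal.tsum_le_tsum fun n =>
        (hgrow j (x n) (hxρ n).1 (ρ n) (hxρ n).2 (hρ n)).trans_eq (ENNReal.ofReal_mul hC)
    _ = ENNReal.ofReal C * ∑' n, ENNReal.ofReal (ρ n) := ENNReal.tsum_mul_left
    _ ≤ ENNReal.ofReal C * ENNReal.ofReal η := by gcongr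
    _ = ENNReal.ofReal (C * η) := (ENNReal.ofReal_mul hC).symm
    _ ≤ ENNReal.ofReal ε := ENNReal.ofReal_le_ofReal hCη

end HausdorffCover

theorem unifIntOn_of_forall_exists_unifIntOn_diff {m : ℕ} {w : ℕ → EuclideanSpace ℝ (Fin m) → ℝ}
    {K : Set (EuclideanSpace ℝ (Fin m))}
    (h : ∀ ε > 0, ∃ U, MeasurableSet U ∧
      (∀ j, ∫⁻ x in U, ENNReal.ofReal (w j x) ≤ ENNReal.ofReal ε) ∧ UnifIntOn w (K \ U)) :
    UnifIntOn w K := by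
  intro ε hε
  obtain ⟨U, hU, hUsmall, hKU⟩ := h (ε / 2) (half_pos hε)
  obtain ⟨δ, hδ, hKUδ⟩ := hKU (ε / 2) (half_pos hε)
  refine ⟨δ, hδ, fun A hA hAK hAδ j => ?_⟩
  calc ∫⁻ x in A, ENNReal.ofReal (w j x)
      = (∫⁻ x in A ∩ U, ENNReal.ofReal (w j x)) + ∫⁻ x in A \ U, ENNReal.ofReal (w j x) :=
        (lintegral_inter_add_sdiff _ A hU).symm
    _ ≤ ENNReal.ofReal (ε / 2) + ENNReal.ofReal (ε / 2) :=
        add_le_add ((lintegral_mono_set inter_subset_right).trans (hUsmall j))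
          (hKUδ _ (hA.diff hU) (sdiff_subset_sdiff_left hAK)
            ((measure_mono sdiff_subset).trans_lt hAδ) j)
    _ = ENNReal.ofReal ε := by rw [← ENNReal.ofReal_add (by positivity) (by positivity), add_halves]

theorem removable_singularity_uniform_integrability_general {m : ℕ}
    (Ω : Set (EuclideanSpace ℝ (Fin m)))
    (E : Set (EuclideanSpace ℝ (Fin m)))
    (hEH : MeasureTheory.Measure.hausdorffMeasure (1 : ℝ) E = 0)
    (w : ℕ → EuclideanSpace ℝ (Fin m) → ℝ)
    (hgrow : ∃ r₀ C : ℝ, 0 < r₀ ∧ 0 ≤ C ∧ Metric.cthickening r₀ E ⊆ Ω ∧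
      ∀ j : ℕ, ∀ x ∈ Metric.thickening r₀ E, ∀ r : ℝ, 0 < r → r < r₀ →
        ∫⁻ y in Metric.ball x r, ENNReal.ofReal (w j y) ≤ ENNReal.ofReal (C * r))
    (hui : ∀ K : Set (EuclideanSpace ℝ (Fin m)), IsCompact K → K ⊆ Ω \ E → UnifIntOn w K) :
    ∀ K : Set (EuclideanSpace ℝ (Fin m)), IsCompact K → K ⊆ Ω → UnifIntOn w K := by
  obtain ⟨r₀, C, hr₀, hC, -, hgrow⟩ := hgrow
  refine fun K hK hKΩ => unifIntOn_of_forall_exists_unifIntOn_diff fun ε hε => ?_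
  obtain ⟨U, hUo, hEU, hU⟩ := exists_isOpen_superset_lintegral_le_of_linear_growth volume hEH
    hr₀ hC (fun j x hx => hgrow j x (self_subset_thickening hr₀ E hx)) hε
  exact ⟨U, hUo.measurableSet, hU,
    hui _ (hK.diff hUo) fun y hy => ⟨hKΩ hy.1, fun hyE => hy.2 (hEU hyE)⟩⟩

/-- Removable singularity theorem for uniform integrability: if a family of nonnegative
locally integrable functions has linear mass growth on small balls near a compact set `E`
with `𝓗¹(E) = 0` and is locally uniformly integrable on `Ω \ E`, then it is locally
uniformly integrable on all of `Ω`. -/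
theorem removable_singularity_uniform_integrability {m : ℕ}
    (Ω : Set (EuclideanSpace ℝ (Fin m))) (hΩ : IsOpen Ω)
    (E : Set (EuclideanSpace ℝ (Fin m))) (hEc : IsCompact E) (hEsub : E ⊆ Ω)
    (hEH : MeasureTheory.Measure.hausdorffMeasure (1 : ℝ) E = 0)
    (w : ℕ → EuclideanSpace ℝ (Fin m) → ℝ)
    (hw0 : ∀ j x, 0 ≤ w j x)
    (hwloc : ∀ j, LocallyIntegrableOn (w j) Ω)
    (hgrow : ∃ r₀ C : ℝ, 0 < r₀ ∧ 0 ≤ C ∧ Metric.cthickening r₀ E ⊆ Ω ∧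
      ∀ j : ℕ, ∀ x ∈ Metric.thickening r₀ E, ∀ r : ℝ, 0 < r → r < r₀ →
        ∫⁻ y in Metric.ball x r, ENNReal.ofReal (w j y) ≤ ENNReal.ofReal (C * r))
    (hui : ∀ K : Set (EuclideanSpace ℝ (Fin m)), IsCompact K → K ⊆ Ω \ E → UnifIntOn w K) :
    ∀ K : Set (EuclideanSpace ℝ (Fin m)), IsCompact K → K ⊆ Ω → UnifIntOn w K :=
  removable_singularity_uniform_integrability_general Ω E hEH w hgrow hui
end
end

section
/- Let m ≥ 2 and ε ∈ (0, 1). Let u be twice continuously differentiable on an open subset of ℝ^m and let x be a point where Du(x) ≠ 0. Then the following refined Kato-type inequality holds: Σ_{i,j} (∂_i∂_j u(x))² ≥ ((m − ε)/(m − 1)) · |D²u(x)·Du(x)|² / |Du(x)|² − ((1 − ε)/(ε (m − 1))) · (Δu(x))², where D²u(x)·Du(x) is the vector with components Σ_j (∂_i∂_j u(x))(∂_j u(x)) and Δu = Σ_i ∂_i∂_i u. (Since D|Du| = (D²u·Du)/|Du| where Du ≠ 0, this says |D²u|² ≥ ((m−ε)/(m−1)) |D|Du||² − ((1−ε)/(ε(m−1)))(Δu)²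 at such points.) -/
/-! With `n = Du/|Du|`, `a = ⟨D²u n, n⟩` and `P = I - n nᵀ` the projection onto `n^⊥`, the
compression `P D²u P` has trace `Δu - a` and squared norm `|D²u|² - 2|D²u n|² + a²`. The
Cauchy–Schwarz inequality for the Frobenius inner product of `P D²u P` and `P`, where
`|P|² = m - 1`, gives `(Δu - a)² ≤ (m - 1)(|D²u|² - 2|D²u n|² + a²)`. Together with
`a² ≤ |D²u n|²` this reduces the claim to `(Δu - ε a)² ≥ 0`. -/

open MeasureTheory Metric Set
open scoped ENNReal NNReal Topology

noncomputable section

/-- Second partial derivative `∂_i ∂_j u (x)`. -/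
noncomputable def hess {m : ℕ} (u : EuclideanSpace ℝ (Fin m) → ℝ)
    (x : EuclideanSpace ℝ (Fin m)) (i j : Fin m) : ℝ :=
  gradient (fun y => (gradient u y) j) x i

namespace Matrix

variable {ι R : Type*} [CommRing R] {n : ι → R}

theorem isSymm_one_sub_vecMulVec_self [DecidableEq ι] : (1 - vecMulVec n n).IsSymm := by
  rw [IsSymm, transpose_sub, transpose_one, transpose_vecMulVec]

variable [Fintype ι]

theorem trace_mul_transpose_eq_sum (X Y : Matrix ι ι R) :
    trace (X * Yᵀ) = ∑ i, ∑ j, X i j * Y i j := by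
  simp [trace, mul_apply]

theorem trace_mul_transpose_sq_le [LinearOrder R] [IsStrictOrderedRing R] (X Y : Matrix ι ι R) :
    trace (X * Yᵀ) ^ 2 ≤ trace (X * Xᵀ) * trace (Y * Yᵀ) := by
  simp only [trace_mul_transpose_eq_sum, ← pow_two, ← Fintype.sum_prod_type']
  exact Finset.sum_mul_sq_le_sq_mul_sq _ _ _

theorem dotProduct_sq_le [LinearOrder R] [IsStrictOrderedRing R] (v w : ι → R) :
    (v ⬝ᵥ w) ^ 2 ≤ (v ⬝ᵥ v) * (w ⬝ᵥ w) := by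
  simpa only [dotProduct, ← sq] using Finset.sum_mul_sq_le_sq_mul_sq Finset.univ v w

theorem IsSymm.sum_sq_eq_trace_mul_self {H : Matrix ι ι R} (hH : H.IsSymm) :
    ∑ i, ∑ j, H i j ^ 2 = trace (H * H) := by
  simp only [sq, ← trace_mul_transpose_eq_sum, hH.eq]

theorem IsSymm.trace_conj_mul_transpose {P H : Matrix ι ι R} (hP : P.IsSymm) (hPP : P * P = P)
    (hH : H.IsSymm) : trace (P * H * P * (P * H * P)ᵀ) = trace (H * P * (H * P)) := by
  rw [transpose_mul, transpose_mul, hP.eq, hH.eq]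
  simp only [Matrix.mul_assoc]
  rw [← Matrix.mul_assoc P P, hPP, trace_mul_comm]
  simp only [Matrix.mul_assoc, hPP]

theorem vecMulVec_self_mul_self (hn : n ⬝ᵥ n = 1) :
    vecMulVec n n * vecMulVec n n = vecMulVec n n := by
  rw [vecMulVec_mul_vecMulVec, hn, one_smul]

theorem trace_mul_vecMulVec_self (H : Matrix ι ι R) :
    trace (H * vecMulVec n n) = n ⬝ᵥ (H *ᵥ n) := by
  rw [mul_vecMulVec, trace_vecMulVec, dotProduct_comm]

theorem IsSymm.trace_mul_self_mul_vecMulVec_self {H : Matrix ι ι R} (hH : H.IsSymm) :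
    trace (H * H * vecMulVec n n) = (H *ᵥ n) ⬝ᵥ (H *ᵥ n) := by
  rw [trace_mul_vecMulVec_self, ← mulVec_mulVec, dotProduct_mulVec, ← mulVec_transpose, hH.eq]

theorem trace_mul_vecMulVec_self_sq (H : Matrix ι ι R) :
    trace (H * vecMulVec n n * (H * vecMulVec n n)) = (n ⬝ᵥ (H *ᵥ n)) ^ 2 := by
  rw [mul_vecMulVec, vecMulVec_mul_vecMulVec, trace_vecMulVec, dotProduct_smul, smul_eq_mul,
    dotProduct_comm n, dotProduct_comm (H *ᵥ n), sq]

variable [DecidableEq ι]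

theorem one_sub_vecMulVec_mul_self (hn : n ⬝ᵥ n = 1) :
    (1 - vecMulVec n n) * (1 - vecMulVec n n) = 1 - vecMulVec n n := by
  rw [sub_mul, mul_sub, mul_sub, vecMulVec_self_mul_self hn]; simp

theorem trace_one_sub_vecMulVec_self (hn : n ⬝ᵥ n = 1) :
    trace (1 - vecMulVec n n) = (Fintype.card ι : R) - 1 := by
  rw [trace_sub, trace_one, trace_vecMulVec, hn]

theorem IsSymm.trace_mul_one_sub_vecMulVec_sq {H : Matrix ι ι R} (hH : H.IsSymm) :
    trace (H * (1 - vecMulVec n n) * (H * (1 - vecMulVec n n))) =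
      trace (H * H) - 2 * (H *ᵥ n) ⬝ᵥ (H *ᵥ n) + (n ⬝ᵥ (H *ᵥ n)) ^ 2 := by
  rw [mul_sub, mul_one, sub_mul, mul_sub, mul_sub, trace_sub, trace_sub, trace_sub,
    trace_mul_vecMulVec_self_sq, ← Matrix.mul_assoc, hH.trace_mul_self_mul_vecMulVec_self,
    trace_mul_cycle, hH.trace_mul_self_mul_vecMulVec_self]
  ring

theorem IsSymm.trace_sub_sq_le [LinearOrder R] [IsStrictOrderedRing R] {H : Matrix ι ι R}
    (hH : H.IsSymm) (hn : n ⬝ᵥ n = 1) :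
    (trace H - n ⬝ᵥ (H *ᵥ n)) ^ 2 ≤
      (Fintype.card ι - 1) * (trace (H * H) - 2 * (H *ᵥ n) ⬝ᵥ (H *ᵥ n) + (n ⬝ᵥ (H *ᵥ n)) ^ 2) := by
  set P := 1 - vecMulVec n n
  have hP : P.IsSymm := isSymm_one_sub_vecMulVec_self
  have hPP : P * P = P := one_sub_vecMulVec_mul_self hn
  have hXP : trace (P * H * P * Pᵀ) = trace H - n ⬝ᵥ (H *ᵥ n) := by
    rw [hP.eq, Matrix.mul_assoc _ P, hPP, trace_mul_cycle, hPP, trace_mul_comm, mul_sub, mul_one,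
      trace_sub, trace_mul_vecMulVec_self]
  have hXX : trace (P * H * P * (P * H * P)ᵀ) =
      trace (H * H) - 2 * (H *ᵥ n) ⬝ᵥ (H *ᵥ n) + (n ⬝ᵥ (H *ᵥ n)) ^ 2 := by
    rw [hP.trace_conj_mul_transpose hPP hH, hH.trace_mul_one_sub_vecMulVec_sq]
  have hPP' : trace (P * Pᵀ) = Fintype.card ι - 1 := by
    rw [hP.eq, hPP, trace_one_sub_vecMulVec_self hn]
  have hcs := trace_mul_transpose_sq_le (P * H * P) P
  rwa [hXP, hXX, hPP', mul_comm] at hcs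

end Matrix

theorem refined_kato_of_compression_bound {m ε a p S T : ℝ} (hm : 2 ≤ m) (hε0 : 0 < ε)
    (hε1 : ε < 1) (hap : a ^ 2 ≤ p) (h : (T - a) ^ 2 ≤ (m - 1) * (S - 2 * p + a ^ 2)) :
    (m - ε) / (m - 1) * p - (1 - ε) / (ε * (m - 1)) * T ^ 2 ≤ S := by
  have hm1 : 0 < m - 1 := by linarith
  rw [div_mul_eq_mul_div, div_mul_eq_mul_div, div_sub_div _ _ hm1.ne' (by positivity),
    div_le_iff₀ (by positivity)]
  nlinarith [mul_le_mul_of_nonneg_left h hε0.le,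
    mul_le_mul_of_nonneg_left hap (by nlinarith : 0 ≤ ε * (m - 2 + ε)), sq_nonneg (T - ε * a)]

namespace Matrix

variable {ι : Type*} [Fintype ι] [DecidableEq ι] {H : Matrix ι ι ℝ}

theorem IsSymm.refined_kato_of_dotProduct_self_eq_one (hH : H.IsSymm)
    (hι : 2 ≤ Fintype.card ι) {ε : ℝ} (hε0 : 0 < ε) (hε1 : ε < 1) {n : ι → ℝ}
    (hn : n ⬝ᵥ n = 1) :
    (Fintype.card ι - ε) / (Fintype.card ι - 1) * ((H *ᵥ n) ⬝ᵥ (H *ᵥ n))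
      - (1 - ε) / (ε * (Fintype.card ι - 1)) * trace H ^ 2 ≤ ∑ i, ∑ j, H i j ^ 2 := by
  refine refined_kato_of_compression_bound (a := n ⬝ᵥ (H *ᵥ n)) (by exact_mod_cast hι) hε0 hε1
    ?_ ?_
  · simpa [hn, dotProduct_comm n] using dotProduct_sq_le n (H *ᵥ n)
  · simpa [hH.sum_sq_eq_trace_mul_self] using hH.trace_sub_sq_le hn

theorem IsSymm.refined_kato (hH : H.IsSymm)
    (hι : 2 ≤ Fintype.card ι) {ε : ℝ} (hε0 : 0 < ε) (hε1 : ε < 1) {v : ι → ℝ} (hv : v ≠ 0) :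
    (Fintype.card ι - ε) / (Fintype.card ι - 1) * ((H *ᵥ v) ⬝ᵥ (H *ᵥ v) / (v ⬝ᵥ v))
      - (1 - ε) / (ε * (Fintype.card ι - 1)) * trace H ^ 2 ≤ ∑ i, ∑ j, H i j ^ 2 := by
  have hv2 : 0 < v ⬝ᵥ v :=
    lt_of_le_of_ne (Finset.sum_nonneg fun i _ => mul_self_nonneg (v i))
      (Ne.symm (dotProduct_self_eq_zero.not.mpr hv))
  set c := (√(v ⬝ᵥ v))⁻¹
  have hc : c ^ 2 = (v ⬝ᵥ v)⁻¹ := by rw [inv_pow, Real.sq_sqrt hv2.le]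
  convert hH.refined_kato_of_dotProduct_self_eq_one hι hε0 hε1 (n := c • v) ?_ using 3
  · rw [mulVec_smul, dotProduct_smul, smul_dotProduct, smul_eq_mul, smul_eq_mul, ← mul_assoc,
      ← sq, hc, div_eq_inv_mul]
  · rw [dotProduct_smul, smul_dotProduct, smul_eq_mul, smul_eq_mul, ← mul_assoc, ← sq, hc,
      inv_mul_cancel₀ hv2.ne']

end Matrix

theorem gradient_apply_eq_fderiv_single {ι : Type*} [Fintype ι] [DecidableEq ι]
    (f : EuclideanSpace ℝ ι → ℝ) (y : EuclideanSpace ℝ ι) (j : ι) :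
    gradient f y j = fderiv ℝ f y (EuclideanSpace.single j 1) := by
  rw [← inner_gradient_left, EuclideanSpace.inner_single_right]
  simp

section Hessian

variable {m : ℕ} {u : EuclideanSpace ℝ (Fin m) → ℝ} {x : EuclideanSpace ℝ (Fin m)}

theorem hess_eq_fderiv_fderiv (hu : DifferentiableAt ℝ (fderiv ℝ u) x) (i j : Fin m) :
    hess u x i j =
      fderiv ℝ (fderiv ℝ u) x (EuclideanSpace.single i 1) (EuclideanSpace.single j 1) := by
  simp only [hess, gradient_apply_eq_fderiv_single]
  rw [fderiv_clm_apply hu (differentiableAt_const _)]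
  simp

theorem isSymm_hess (hu : ContDiffAt ℝ 2 u x) : (Matrix.of (hess u x)).IsSymm := by
  have hdiff : DifferentiableAt ℝ (fderiv ℝ u) x :=
    (hu.fderiv_right (m := 1) le_rfl).differentiableAt one_ne_zero
  refine Matrix.IsSymm.ext fun i j => ?_
  simp only [Matrix.of_apply, hess_eq_fderiv_fderiv hdiff]
  exact hu.isSymmSndFDerivAt (by simp) _ _

end Hessian

/-- Refined Kato-type inequality: at a point where `Du ≠ 0`, for `ε ∈ (0,1)`,
`|D²u|² ≥ ((m-ε)/(m-1)) |D²u·Du|²/|Du|² − ((1-ε)/(ε(m-1))) (Δu)²`. -/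
theorem refined_kato_inequality {m : ℕ} (hm : 2 ≤ m)
    (ε : ℝ) (hε : ε ∈ Set.Ioo (0 : ℝ) 1)
    (V : Set (EuclideanSpace ℝ (Fin m))) (hV : IsOpen V)
    (u : EuclideanSpace ℝ (Fin m) → ℝ) (hu : ContDiffOn ℝ 2 u V)
    (x : EuclideanSpace ℝ (Fin m)) (hx : x ∈ V) (hDu : gradient u x ≠ 0) :
    ((m : ℝ) - ε) / ((m : ℝ) - 1) *
        ((∑ i, (∑ j, hess u x i j * (gradient u x) j) ^ 2) / ‖gradient u x‖ ^ 2)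
      - (1 - ε) / (ε * ((m : ℝ) - 1)) * (∑ i, hess u x i i) ^ 2
      ≤ ∑ i, ∑ j, hess u x i j ^ 2 := by
  have hux : ContDiffAt ℝ 2 u x := hu.contDiffAt (hV.mem_nhds hx)
  have key := Matrix.IsSymm.refined_kato (isSymm_hess hux) (by simpa using hm) hε.1 hε.2
    (v := WithLp.ofLp (gradient u x)) (by simpa using hDu)
  have hnorm :
      ‖gradient u x‖ ^ 2 = WithLp.ofLp (gradient u x) ⬝ᵥ WithLp.ofLp (gradient u x) := by
    rw [← real_inner_self_eq_norm_sq, EuclideanSpace.inner_eq_star_dotProduct, star_trivial]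
  rw [hnorm]
  simpa only [Fintype.card_fin, Matrix.trace, Matrix.diag, Matrix.mulVec, dotProduct,
    Matrix.of_apply, sq] using key
end
end

section
/- Let L > 0 and let f_j : ℝ → ℝ (j ∈ ℕ) be 1-Lipschitz functions such that f_j(L) − f_j(0) → L as j → ∞. Then for every θ ∈ (0, 1), the Lebesgue measure of the set A_j(θ) := { t ∈ [0, L] : f_j is differentiable at t and |f_j′(t)| ≤ 1 − θ } tends to 0 as j → ∞. -/
/-!
A `K`-Lipschitz function is absolutely continuous, so `∫ₐᵇ (K - f') = K (b - a) - (f b - f a)`,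
and the integrand is nonnegative since `|f'| ≤ K` everywhere. Markov's inequality bounds the
measure of `{f' ≤ K - θ}` by that deficit divided by `θ`; for `K = 1` on `[0, L]` the deficit
`L - (f_j L - f_j 0)` tends to `0`.
-/

open MeasureTheory Filter Set
open scoped ENNReal NNReal Topology

namespace LipschitzWith

variable {f : ℝ → ℝ} {K : ℝ≥0}

theorem intervalIntegral_deriv_eq_sub (hf : LipschitzWith K f) (a b : ℝ) :
    ∫ x in a..b, deriv f x = f b - f a :=
  (hf.lipschitzOnWith (s := uIcc a b)).absolutelyContinuousOnInterval.integral_deriv_eq_sub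

theorem intervalIntegrable_deriv (hf : LipschitzWith K f) (a b : ℝ) :
    IntervalIntegrable (deriv f) volume a b :=
  (hf.lipschitzOnWith (s := uIcc a b)).absolutelyContinuousOnInterval.intervalIntegrable_deriv

theorem integral_Icc_const_sub_deriv (hf : LipschitzWith K f) {a b : ℝ} (hab : a ≤ b) :
    ∫ x in Icc a b, (K - deriv f x) = K * (b - a) - (f b - f a) := by
  rw [integral_Icc_eq_integral_Ioc, ← intervalIntegral.integral_of_le hab,
    intervalIntegral.integral_sub intervalIntegrable_const (hf.intervalIntegrable_deriv a b),
    hf.intervalIntegral_deriv_eq_sub, intervalIntegral.integral_const, smul_eq_mul, mul_comm]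

theorem mul_volume_deriv_le_le (hf : LipschitzWith K f) {a b : ℝ} (hab : a ≤ b) (θ : ℝ) :
    ENNReal.ofReal θ * volume {t ∈ Icc a b | deriv f t ≤ K - θ} ≤
      ENNReal.ofReal (K * (b - a) - (f b - f a)) := by
  set μ := volume.restrict (Icc a b)
  have hdeficit_nonneg : ∀ t, 0 ≤ K - deriv f t := fun t =>
    sub_nonneg.2 ((le_abs_self _).trans (norm_deriv_le_of_lipschitz hf))
  have hdeficit_int : Integrable (fun t => K - deriv f t) μ :=
    (integrable_const _).sub
      ((intervalIntegrable_iff_integrableOn_Icc_of_le hab).1 (hf.intervalIntegrable_deriv a b))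
  calc ENNReal.ofReal θ * volume {t ∈ Icc a b | deriv f t ≤ K - θ}
      ≤ ENNReal.ofReal θ * μ {t | ENNReal.ofReal θ ≤ ENNReal.ofReal (K - deriv f t)} := by
        rw [Measure.restrict_apply' measurableSet_Icc]
        gcongr
        exact fun t ⟨ht, hderiv⟩ => ⟨ENNReal.ofReal_le_ofReal (by linarith), ht⟩
    _ ≤ ∫⁻ t, ENNReal.ofReal (K - deriv f t) ∂μ :=
        mul_meas_ge_le_lintegral₀ hdeficit_int.aemeasurable.ennreal_ofReal _
    _ = ENNReal.ofReal (K * (b - a) - (f b - f a)) := by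
        rw [← ofReal_integral_eq_lintegral_ofReal hdeficit_int (ae_of_all _ hdeficit_nonneg),
          hf.integral_Icc_const_sub_deriv hab]

end LipschitzWith

/-- If `1`-Lipschitz functions `f j : ℝ → ℝ` satisfy `f j L − f j 0 → L`, then for every
`θ ∈ (0,1)` the Lebesgue measure of the set of points of `[0, L]` where `f j` is
differentiable with `|f j′| ≤ 1 − θ` tends to `0`. -/
theorem derivative_tends_to_one_in_measure (L : ℝ) (hL : 0 < L)
    (f : ℕ → ℝ → ℝ) (hf : ∀ j, LipschitzWith 1 (f j))
    (hconv : Tendsto (fun j => f j L - f j 0) atTop (𝓝 L)) :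
    ∀ θ : ℝ, θ ∈ Set.Ioo (0 : ℝ) 1 →
      Tendsto
        (fun j => volume {t : ℝ | t ∈ Set.Icc (0 : ℝ) L ∧
          DifferentiableAt ℝ (f j) t ∧ |deriv (f j) t| ≤ 1 - θ})
        atTop (𝓝 0) := by
  rintro θ ⟨hθ, -⟩
  have hbound : Tendsto (fun j => ENNReal.ofReal ((L - (f j L - f j 0)) / θ)) atTop (𝓝 0) := by
    simpa using ENNReal.tendsto_ofReal (((tendsto_const_nhds (x := L)).sub hconv).div_const θ)
  refine tendsto_of_tendsto_of_tendsto_of_le_of_le tendsto_const_nhds hbound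
    (fun _ => zero_le) fun j => ?_
  rw [ENNReal.ofReal_div_of_pos hθ, ENNReal.le_div_iff_mul_le (by simp [hθ]) (by simp), mul_comm]
  calc ENNReal.ofReal θ * volume {t | t ∈ Icc 0 L ∧
          DifferentiableAt ℝ (f j) t ∧ |deriv (f j) t| ≤ 1 - θ}
      ≤ ENNReal.ofReal θ * volume {t ∈ Icc 0 L | deriv (f j) t ≤ (1 : ℝ≥0) - θ} := by
        gcongr
        exact fun ⟨_, hderiv⟩ => by simpa using (le_abs_self _).trans hderiv
    _ ≤ ENNReal.ofReal (L - (f j L - f j 0)) := by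
        simpa using (hf j).mul_volume_deriv_le_le hL.le θ
end
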